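/- Let M ∈ k(t)^{n×n} be a nonsingular matrix with rows b_0, …, b_{n−1}. Then: (1) M is row reduced if and only if deg(det M) = deg(b_0) + ⋯ + deg(b_{n−1}); (2) there exists a unimodular matrix U ∈ k[t]^{n×n} (i.e., det U ∈ k×) such that U·M is row reduced. -/

import Mathlib

open Classical

/-- Degree of a rational function, with `deg 0 = ⊥`. -/
noncomputable def ratDeg {k : Type*} [Field k] (z : RatFunc k) : WithBot ℤ :=
  if z = 0 then ⊥ else (z.intDegree : WithBot ℤ)

/-- Degree of a row vector: the maximum of the degrees of its entries. -/
noncomputable def rowDeg {k : Type*} [Field k] {n : ℕ} (b : Fin n → RatFunc k) : WithBot ℤ :=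
  Finset.univ.sup fun j => ratDeg (b j)

/-- A square matrix over `k(t)` with rows `b₀, …, b_{n-1}` is row reduced if
`deg (Σ λᵢ bᵢ) = maxᵢ deg (λᵢ bᵢ)` for all `λᵢ ∈ k(t)`. -/
def RowReduced {k : Type*} [Field k] {n : ℕ} (M : Matrix (Fin n) (Fin n) (RatFunc k)) : Prop :=
  ∀ c : Fin n → RatFunc k,
    rowDeg (fun j => ∑ i, c i * M i j) = Finset.univ.sup fun i => ratDeg (c i) + rowDeg (M i)

/-!
Let `d i` be the degree of the row `M i` and `L` the matrix over `k` whose entry `(i, j)` is the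
coefficient of `t ^ d i` in `M i j`. Expanding the determinant, `deg (det M) ≤ ∑ d i`, and the
coefficient of `t ^ (∑ d i)` in `det M` is `det L`. If `det L ≠ 0`, the top coefficients of a
combination `∑ λ i • M i` cannot cancel, so `M` is row reduced. If `det L = 0`, a kernel vector
`γ` of `L` gives the polynomial combination `∑ γ i t ^ (d m - d i) • M i` of degree `< d m`, where
`d m` is maximal on the support of `γ`; so `M` is not row reduced, and replacing `M m` by this
combination is a unimodular row operation that lowers `∑ d i` while `deg (det M)` stays fixed.
Iterating it must stop at a row-reduced matrix.
-/

open Polynomial Matrix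

lemma WithBot.le_coe_sub_of_add_le {a : WithBot ℤ} {e D : ℤ} (h : a + e ≤ D) : a ≤ ↑(D - e) := by
  induction a using WithBot.recBotCoe with
  | bot => exact bot_le
  | coe a => norm_cast at h ⊢; omega

lemma WithBot.eq_coe_sub_of_add_eq {a : WithBot ℤ} {e D : ℤ} (h : a + e = D) : a = ↑(D - e) := by
  induction a using WithBot.recBotCoe with
  | bot => simp at h
  | coe a => norm_cast at h ⊢; omega

section LeadingCoeff

variable {k : Type*} [Field k]

@[simp] lemma ratDeg_zero : ratDeg (0 : RatFunc k) = ⊥ := if_pos rfl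

lemma ratDeg_of_ne_zero {z : RatFunc k} (h : z ≠ 0) : ratDeg z = z.intDegree := if_neg h

@[simp] lemma ratDeg_eq_bot_iff {z : RatFunc k} : ratDeg z = ⊥ ↔ z = 0 := by
  by_cases h : z = 0 <;> simp [h, ratDeg_of_ne_zero]

lemma ratDeg_mul (x y : RatFunc k) : ratDeg (x * y) = ratDeg x + ratDeg y := by
  by_cases hx : x = 0
  · simp [hx]
  by_cases hy : y = 0
  · simp [hy]
  rw [ratDeg_of_ne_zero hx, ratDeg_of_ne_zero hy, ratDeg_of_ne_zero (mul_ne_zero hx hy),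
    RatFunc.intDegree_mul hx hy, WithBot.coe_add]

lemma ratDeg_neg (x : RatFunc k) : ratDeg (-x) = ratDeg x := by
  by_cases hx : x = 0
  · simp [hx]
  rw [ratDeg_of_ne_zero hx, ratDeg_of_ne_zero (neg_ne_zero.2 hx), RatFunc.intDegree_neg]

lemma ratDeg_add_le (x y : RatFunc k) : ratDeg (x + y) ≤ max (ratDeg x) (ratDeg y) := by
  by_cases hx : x = 0
  · simp [hx]
  by_cases hy : y = 0
  · simp [hy]
  by_cases hxy : x + y = 0
  · simp [hxy]
  rw [ratDeg_of_ne_zero hx, ratDeg_of_ne_zero hy, ratDeg_of_ne_zero hxy]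
  exact_mod_cast RatFunc.intDegree_add_le hy hxy

lemma ratDeg_algebraMap {p : k[X]} (hp : p ≠ 0) :
    ratDeg (algebraMap k[X] (RatFunc k) p) = (p.natDegree : ℤ) := by
  rw [ratDeg_of_ne_zero (RatFunc.algebraMap_ne_zero hp), RatFunc.intDegree_polynomial]

lemma ratDeg_algebraMap_of_isUnit {p : k[X]} (hp : IsUnit p) :
    ratDeg (algebraMap k[X] (RatFunc k) p) = 0 := by
  rw [ratDeg_algebraMap hp.ne_zero, natDegree_eq_zero_of_isUnit hp]
  rfl

lemma ratDeg_sum_le {ι : Type*} {s : Finset ι} {f : ι → RatFunc k} {d : WithBot ℤ}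
    (h : ∀ i ∈ s, ratDeg (f i) ≤ d) : ratDeg (∑ i ∈ s, f i) ≤ d :=
  Finset.sum_induction f (fun z => ratDeg z ≤ d)
    (fun x y hx hy => (ratDeg_add_le x y).trans (max_le hx hy)) (by simp) h

lemma ratDeg_prod_le {ι : Type*} {s : Finset ι} {f : ι → RatFunc k} {e : ι → ℤ}
    (h : ∀ i ∈ s, ratDeg (f i) ≤ e i) : ratDeg (∏ i ∈ s, f i) ≤ ↑(∑ i ∈ s, e i) := by
  induction s using Finset.cons_induction with
  | empty => simp [ratDeg_of_ne_zero]
  | cons a s ha ih =>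
    rw [Finset.prod_cons, Finset.sum_cons, ratDeg_mul, WithBot.coe_add]
    exact add_le_add (h a (s.mem_cons_self a)) (ih fun i hi => h i (Finset.mem_cons_of_mem hi))

/-- `z.denom` is monic, so this is the leading coefficient of `z` at infinity. -/
noncomputable def ratLeadingCoeff (z : RatFunc k) : k := z.num.leadingCoeff

lemma ratLeadingCoeff_ne_zero {z : RatFunc k} (h : z ≠ 0) : ratLeadingCoeff z ≠ 0 :=
  leadingCoeff_ne_zero.2 (RatFunc.num_ne_zero h)

lemma ratLeadingCoeff_div (p : k[X]) {q : k[X]} (hq : q ≠ 0) :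
    ratLeadingCoeff (algebraMap k[X] (RatFunc k) p / algebraMap k[X] (RatFunc k) q) =
      p.leadingCoeff / q.leadingCoeff := by
  have h := congrArg leadingCoeff
    ((RatFunc.num_mul_eq_mul_denom_iff (p := p) (x := algebraMap k[X] (RatFunc k) p /
      algebraMap k[X] (RatFunc k) q) hq).2 rfl)
  rw [leadingCoeff_mul, leadingCoeff_mul, (RatFunc.monic_denom _).leadingCoeff, mul_one] at h
  rw [ratLeadingCoeff, ← h, mul_div_cancel_right₀ _ (leadingCoeff_ne_zero.2 hq)]

lemma ratLeadingCoeff_algebraMap (p : k[X]) :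
    ratLeadingCoeff (algebraMap k[X] (RatFunc k) p) = p.leadingCoeff := by
  simpa using ratLeadingCoeff_div p (one_ne_zero' k[X])

lemma ratLeadingCoeff_mul (x y : RatFunc k) :
    ratLeadingCoeff (x * y) = ratLeadingCoeff x * ratLeadingCoeff y := by
  have h : x * y = algebraMap k[X] (RatFunc k) (x.num * y.num) /
      algebraMap k[X] (RatFunc k) (x.denom * y.denom) := by
    rw [map_mul, map_mul, ← div_mul_div_comm, RatFunc.num_div_denom, RatFunc.num_div_denom]
  rw [h, ratLeadingCoeff_div _ (mul_ne_zero x.denom_ne_zero y.denom_ne_zero), leadingCoeff_mul,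
    leadingCoeff_mul, (RatFunc.monic_denom x).leadingCoeff, (RatFunc.monic_denom y).leadingCoeff,
    mul_one, div_one, ratLeadingCoeff, ratLeadingCoeff]

lemma ratLeadingCoeff_neg (x : RatFunc k) : ratLeadingCoeff (-x) = -ratLeadingCoeff x := by
  have h : -x = algebraMap k[X] (RatFunc k) (-x.num) / algebraMap k[X] (RatFunc k) x.denom := by
    rw [map_neg, neg_div, RatFunc.num_div_denom]
  rw [h, ratLeadingCoeff_div _ x.denom_ne_zero, leadingCoeff_neg,
    (RatFunc.monic_denom x).leadingCoeff, div_one, ratLeadingCoeff]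

/-- The coefficient of `t ^ d` in the expansion at infinity of a rational function of degree at
most `d`. -/
noncomputable def leadingCoeffAt (d : ℤ) (z : RatFunc k) : k :=
  if ratDeg z = d then ratLeadingCoeff z else 0

@[simp] lemma leadingCoeffAt_zero (d : ℤ) : leadingCoeffAt d (0 : RatFunc k) = 0 := by
  simp [leadingCoeffAt]

lemma leadingCoeffAt_of_ne_zero (d : ℤ) {z : RatFunc k} (hz : z ≠ 0) :
    leadingCoeffAt d z = if z.intDegree = d then ratLeadingCoeff z else 0 := by
  simp [leadingCoeffAt, ratDeg_of_ne_zero hz]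

lemma leadingCoeffAt_ne_zero_iff {d : ℤ} {z : RatFunc k} :
    leadingCoeffAt d z ≠ 0 ↔ ratDeg z = d := by
  by_cases hz : z = 0
  · simp [hz]
  rw [leadingCoeffAt_of_ne_zero d hz, ratDeg_of_ne_zero hz, WithBot.coe_inj]
  split_ifs with h <;> simp [h, ratLeadingCoeff_ne_zero hz]

lemma leadingCoeffAt_neg (d : ℤ) (x : RatFunc k) : leadingCoeffAt d (-x) = -leadingCoeffAt d x := by
  unfold leadingCoeffAt
  rw [ratDeg_neg, ratLeadingCoeff_neg]
  split_ifs <;> simp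

lemma leadingCoeffAt_units_smul (d : ℤ) (u : ℤˣ) (x : RatFunc k) :
    leadingCoeffAt d (u • x) = u • leadingCoeffAt d x := by
  rcases Int.units_eq_one_or u with rfl | rfl
  · simp
  · simp [Units.neg_smul, leadingCoeffAt_neg]

lemma ratDeg_units_smul (u : ℤˣ) (x : RatFunc k) : ratDeg (u • x) = ratDeg x := by
  rcases Int.units_eq_one_or u with rfl | rfl
  · simp
  · simp [Units.neg_smul, ratDeg_neg]

lemma leadingCoeffAt_div {p q : k[X]} (hq : q ≠ 0) {d : ℤ} {N : ℕ} (hN : (N : ℤ) = d + q.natDegree)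
    (hp : p.natDegree ≤ N) :
    leadingCoeffAt d (algebraMap k[X] (RatFunc k) p / algebraMap k[X] (RatFunc k) q) =
      p.coeff N / q.leadingCoeff := by
  by_cases hp0 : p = 0
  · simp [hp0]
  have hq' := RatFunc.algebraMap_ne_zero hq
  have hp' := RatFunc.algebraMap_ne_zero hp0
  rw [leadingCoeffAt_of_ne_zero d (div_ne_zero hp' hq'), RatFunc.intDegree_div hp' hq',
    RatFunc.intDegree_polynomial, RatFunc.intDegree_polynomial, ratLeadingCoeff_div p hq]
  split_ifs with h
  · rw [show N = p.natDegree by omega, coeff_natDegree]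
  · rw [coeff_eq_zero_of_natDegree_lt (by omega), zero_div]

lemma leadingCoeffAt_add {d : ℤ} {x y : RatFunc k} (hx : ratDeg x ≤ d) (hy : ratDeg y ≤ d) :
    leadingCoeffAt d (x + y) = leadingCoeffAt d x + leadingCoeffAt d y := by
  by_cases hx0 : x = 0
  · simp [hx0]
  by_cases hy0 : y = 0
  · simp [hy0]
  set q := x.denom * y.denom
  have hq : q ≠ 0 := mul_ne_zero x.denom_ne_zero y.denom_ne_zero
  have hxd : x.intDegree ≤ d := by rwa [ratDeg_of_ne_zero hx0, WithBot.coe_le_coe] at hx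
  have hyd : y.intDegree ≤ d := by rwa [ratDeg_of_ne_zero hy0, WithBot.coe_le_coe] at hy
  unfold RatFunc.intDegree at hxd hyd
  have hqdeg : q.natDegree = x.denom.natDegree + y.denom.natDegree :=
    natDegree_mul x.denom_ne_zero y.denom_ne_zero
  have hN : (((d + q.natDegree).toNat : ℕ) : ℤ) = d + q.natDegree := by omega
  have hxq : x = algebraMap k[X] (RatFunc k) (x.num * y.denom) / algebraMap k[X] (RatFunc k) q :=
    (RatFunc.num_mul_eq_mul_denom_iff hq).1 (by ring)
  have hyq : y = algebraMap k[X] (RatFunc k) (y.num * x.denom) / algebraMap k[X] (RatFunc k) q :=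
    (RatFunc.num_mul_eq_mul_denom_iff hq).1 (by ring)
  have hxN : (x.num * y.denom).natDegree ≤ (d + q.natDegree).toNat := by
    rw [natDegree_mul (RatFunc.num_ne_zero hx0) y.denom_ne_zero]
    omega
  have hyN : (y.num * x.denom).natDegree ≤ (d + q.natDegree).toNat := by
    rw [natDegree_mul (RatFunc.num_ne_zero hy0) x.denom_ne_zero]
    omega
  calc leadingCoeffAt d (x + y)
      = leadingCoeffAt d (algebraMap k[X] (RatFunc k) (x.num * y.denom + y.num * x.denom) /
          algebraMap k[X] (RatFunc k) q) := by rw [map_add, add_div, ← hxq, ← hyq]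
    _ = leadingCoeffAt d x + leadingCoeffAt d y := by
      rw [leadingCoeffAt_div hq hN ((natDegree_add_le _ _).trans (max_le hxN hyN)), coeff_add,
        add_div, ← leadingCoeffAt_div hq hN hxN, ← leadingCoeffAt_div hq hN hyN, ← hxq, ← hyq]

lemma leadingCoeffAt_mul {d e : ℤ} {x y : RatFunc k} (hx : ratDeg x ≤ d) (hy : ratDeg y ≤ e) :
    leadingCoeffAt (d + e) (x * y) = leadingCoeffAt d x * leadingCoeffAt e y := by
  by_cases hx0 : x = 0
  · simp [hx0]
  by_cases hy0 : y = 0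
  · simp [hy0]
  rw [ratDeg_of_ne_zero hx0, WithBot.coe_le_coe] at hx
  rw [ratDeg_of_ne_zero hy0, WithBot.coe_le_coe] at hy
  rw [leadingCoeffAt_of_ne_zero _ hx0, leadingCoeffAt_of_ne_zero _ hy0,
    leadingCoeffAt_of_ne_zero _ (mul_ne_zero hx0 hy0), RatFunc.intDegree_mul hx0 hy0,
    ratLeadingCoeff_mul]
  split_ifs <;> first | rfl | omega | simp

lemma leadingCoeffAt_C_mul_X_pow (a : k) (t : ℕ) :
    leadingCoeffAt t (algebraMap k[X] (RatFunc k) (C a * X ^ t)) = a := by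
  by_cases ha : a = 0
  · simp [ha]
  rw [leadingCoeffAt_of_ne_zero _ (RatFunc.algebraMap_ne_zero (by simpa using ha)),
    RatFunc.intDegree_polynomial, natDegree_C_mul_X_pow t a ha, if_pos rfl,
    ratLeadingCoeff_algebraMap, leadingCoeff_C_mul_X_pow]

lemma leadingCoeffAt_sum {ι : Type*} {s : Finset ι} {f : ι → RatFunc k} {d : ℤ}
    (h : ∀ i ∈ s, ratDeg (f i) ≤ d) :
    leadingCoeffAt d (∑ i ∈ s, f i) = ∑ i ∈ s, leadingCoeffAt d (f i) := by
  induction s using Finset.cons_induction with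
  | empty => simp
  | cons a s ha ih =>
    have hs : ∀ i ∈ s, ratDeg (f i) ≤ d := fun i hi => h i (Finset.mem_cons_of_mem hi)
    rw [Finset.sum_cons, Finset.sum_cons, leadingCoeffAt_add (h a (s.mem_cons_self a))
      (ratDeg_sum_le hs), ih hs]

lemma leadingCoeffAt_prod {ι : Type*} {s : Finset ι} {f : ι → RatFunc k} {e : ι → ℤ}
    (h : ∀ i ∈ s, ratDeg (f i) ≤ e i) :
    leadingCoeffAt (∑ i ∈ s, e i) (∏ i ∈ s, f i) = ∏ i ∈ s, leadingCoeffAt (e i) (f i) := by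
  induction s using Finset.cons_induction with
  | empty => simp [leadingCoeffAt_of_ne_zero, ratLeadingCoeff]
  | cons a s ha ih =>
    have hs : ∀ i ∈ s, ratDeg (f i) ≤ e i := fun i hi => h i (Finset.mem_cons_of_mem hi)
    rw [Finset.prod_cons, Finset.sum_cons, Finset.prod_cons,
      leadingCoeffAt_mul (h a (s.mem_cons_self a)) (ratDeg_prod_le hs), ih hs]

end LeadingCoeff

section RowDegree

variable {k : Type*} [Field k] {n : ℕ} {M : Matrix (Fin n) (Fin n) (RatFunc k)} {d : Fin n → ℤ}

lemma ratDeg_le_rowDeg (b : Fin n → RatFunc k) (j : Fin n) : ratDeg (b j) ≤ rowDeg b :=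
  Finset.le_sup (f := fun j => ratDeg (b j)) (Finset.mem_univ j)

lemma rowDeg_le_iff {b : Fin n → RatFunc k} {a : WithBot ℤ} :
    rowDeg b ≤ a ↔ ∀ j, ratDeg (b j) ≤ a := by
  simp [rowDeg]

lemma rowDeg_lt_coe_iff {b : Fin n → RatFunc k} {a : ℤ} :
    rowDeg b < a ↔ ∀ j, ratDeg (b j) < a := by
  simp [rowDeg, Finset.sup_lt_iff (WithBot.bot_lt_coe a)]

lemma exists_rowDeg_eq_coe (hM : M.det ≠ 0) (i : Fin n) :
    ∃ e : ℤ, rowDeg (M i) = e := by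
  obtain ⟨j, hj⟩ : ∃ j, M i j ≠ 0 := by
    by_contra! h
    exact hM (Matrix.det_eq_zero_of_row_eq_zero i h)
  obtain ⟨e, he⟩ := (WithBot.ne_bot_iff_exists (x := rowDeg (M i))).1 fun h => hj <| by
    simpa [h] using ratDeg_le_rowDeg (M i) j
  exact ⟨e, he.symm⟩

noncomputable def leadingRowCoeffMatrix (M : Matrix (Fin n) (Fin n) (RatFunc k)) (d : Fin n → ℤ) :
    Matrix (Fin n) (Fin n) k :=
  Matrix.of fun i j => leadingCoeffAt (d i) (M i j)

lemma ratDeg_le_of_rowDeg_eq (hd : ∀ i, rowDeg (M i) = d i) (i j : Fin n) :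
    ratDeg (M i j) ≤ d i :=
  hd i ▸ ratDeg_le_rowDeg (M i) j

lemma ratDeg_mul_le_of_rowDeg_eq (hd : ∀ i, rowDeg (M i) = d i) {c : RatFunc k} {D : ℤ} {i : Fin n}
    (hc : ratDeg c ≤ ↑(D - d i)) (j : Fin n) : ratDeg (c * M i j) ≤ D := by
  rw [ratDeg_mul, ← sub_add_cancel D (d i), WithBot.coe_add]
  exact add_le_add hc (ratDeg_le_of_rowDeg_eq hd i j)

lemma ratDeg_vecMul_le (hd : ∀ i, rowDeg (M i) = d i) {c : Fin n → RatFunc k} {D : ℤ}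
    (hc : ∀ i, ratDeg (c i) ≤ ↑(D - d i)) (j : Fin n) : ratDeg ((c ᵥ* M) j) ≤ D :=
  (vecMul_apply_eq_sum c M j).symm ▸ ratDeg_sum_le fun i _ => ratDeg_mul_le_of_rowDeg_eq hd (hc i) j

lemma leadingCoeffAt_vecMul (hd : ∀ i, rowDeg (M i) = d i) {c : Fin n → RatFunc k} {D : ℤ}
    (hc : ∀ i, ratDeg (c i) ≤ ↑(D - d i)) (j : Fin n) :
    leadingCoeffAt D ((c ᵥ* M) j) =
      ((fun i => leadingCoeffAt (D - d i) (c i)) ᵥ* leadingRowCoeffMatrix M d) j := by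
  simp only [vecMul_apply_eq_sum, leadingRowCoeffMatrix, Matrix.of_apply]
  rw [leadingCoeffAt_sum fun i _ => ratDeg_mul_le_of_rowDeg_eq hd (hc i) j]
  refine Finset.sum_congr rfl fun i _ => ?_
  rw [← leadingCoeffAt_mul (hc i) (ratDeg_le_of_rowDeg_eq hd i j), sub_add_cancel]

lemma ratDeg_prod_perm_le (hd : ∀ i, rowDeg (M i) = d i) (σ : Equiv.Perm (Fin n)) :
    ratDeg (∏ i, M (σ i) i) ≤ ↑(∑ i, d i) :=
  Equiv.sum_comp σ d ▸ ratDeg_prod_le fun i _ => ratDeg_le_of_rowDeg_eq hd (σ i) i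

lemma ratDeg_det_le (hd : ∀ i, rowDeg (M i) = d i) : ratDeg M.det ≤ ↑(∑ i, d i) := by
  rw [Matrix.det_apply]
  exact ratDeg_sum_le fun σ _ => (ratDeg_units_smul _ _).trans_le (ratDeg_prod_perm_le hd σ)

lemma leadingCoeffAt_det (hd : ∀ i, rowDeg (M i) = d i) :
    leadingCoeffAt (∑ i, d i) M.det = (leadingRowCoeffMatrix M d).det := by
  rw [Matrix.det_apply, Matrix.det_apply, leadingCoeffAt_sum fun σ _ =>
    (ratDeg_units_smul _ _).trans_le (ratDeg_prod_perm_le hd σ)]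
  refine Finset.sum_congr rfl fun σ _ => ?_
  rw [leadingCoeffAt_units_smul, ← Equiv.sum_comp σ d,
    leadingCoeffAt_prod fun i _ => ratDeg_le_of_rowDeg_eq hd (σ i) i]
  rfl

lemma ratDeg_det_eq_sum_iff (hd : ∀ i, rowDeg (M i) = d i) :
    ratDeg M.det = ↑(∑ i, d i) ↔ (leadingRowCoeffMatrix M d).det ≠ 0 := by
  rw [← leadingCoeffAt_det hd, leadingCoeffAt_ne_zero_iff]

lemma rowDeg_vecMul_le (M : Matrix (Fin n) (Fin n) (RatFunc k)) (c : Fin n → RatFunc k) :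
    rowDeg (c ᵥ* M) ≤ Finset.univ.sup fun i => ratDeg (c i) + rowDeg (M i) :=
  rowDeg_le_iff.2 fun j => (vecMul_apply_eq_sum c M j).symm ▸ ratDeg_sum_le fun i hi => by
    rw [ratDeg_mul]
    exact (add_le_add le_rfl (ratDeg_le_rowDeg (M i) j)).trans
      (Finset.le_sup (f := fun i => ratDeg (c i) + rowDeg (M i)) hi)

lemma rowReduced_of_det_ne_zero (hd : ∀ i, rowDeg (M i) = d i)
    (hL : (leadingRowCoeffMatrix M d).det ≠ 0) : RowReduced M := by
  intro c
  change rowDeg (c ᵥ* M) = _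
  refine le_antisymm (rowDeg_vecMul_le M c) ?_
  by_cases hS : (Finset.univ.sup fun i => ratDeg (c i) + rowDeg (M i)) = ⊥
  · simp [hS]
  obtain ⟨D, hD⟩ := WithBot.ne_bot_iff_exists.1 hS
  obtain ⟨i₁, -, hi₁⟩ := Finset.exists_mem_eq_sup Finset.univ
    (Finset.nonempty_iff_ne_empty.2 fun h => hS (by simp [h])) fun i => ratDeg (c i) + rowDeg (M i)
  rw [← hD] at hi₁ ⊢
  have hc : ∀ i, ratDeg (c i) ≤ ↑(D - d i) := fun i => WithBot.le_coe_sub_of_add_le <| by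
    rw [← hd, hD]
    exact Finset.le_sup (f := fun i => ratDeg (c i) + rowDeg (M i)) (Finset.mem_univ i)
  have hγ : (fun i => leadingCoeffAt (D - d i) (c i)) ≠ 0 := fun h =>
    leadingCoeffAt_ne_zero_iff.2 (WithBot.eq_coe_sub_of_add_eq (hd i₁ ▸ hi₁.symm)) (congrFun h i₁)
  obtain ⟨j, hj⟩ := Function.ne_iff.1 fun h => hL (exists_vecMul_eq_zero_iff.1 ⟨_, hγ, h⟩)
  rw [← leadingCoeffAt_vecMul hd hc, Pi.zero_apply, leadingCoeffAt_ne_zero_iff] at hj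
  exact hj ▸ ratDeg_le_rowDeg _ j

/-- A kernel vector `γ` of the leading row coefficient matrix, supported in degrees at most `d m`,
yields the polynomial combination `∑ γ i t ^ (d m - d i) • M i` whose top coefficients cancel. -/
lemma exists_rowDeg_vecMul_lt (hd : ∀ i, rowDeg (M i) = d i)
    (hL : (leadingRowCoeffMatrix M d).det = 0) :
    ∃ (r : Fin n → k[X]) (m : Fin n), IsUnit (r m) ∧
      (∀ i, ratDeg (algebraMap k[X] (RatFunc k) (r i)) ≤ ↑(d m - d i)) ∧
      rowDeg ((algebraMap k[X] (RatFunc k) ∘ r) ᵥ* M) < d m := by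
  obtain ⟨γ, hγ, hγL⟩ := exists_vecMul_eq_zero_iff.2 hL
  obtain ⟨m, hm, hmax⟩ := (Finset.univ.filter (γ · ≠ 0)).exists_max_image d <| by
    obtain ⟨i, hi⟩ := Function.ne_iff.1 hγ
    exact ⟨i, by simpa using hi⟩
  simp only [Finset.mem_filter, Finset.mem_univ, true_and] at hm hmax
  have hdeg : ∀ i, γ i ≠ 0 → ((d m - d i).toNat : ℤ) = d m - d i := fun i hi =>
    Int.toNat_of_nonneg (by linarith [hmax i hi])
  set r : Fin n → k[X] := fun i => C (γ i) * X ^ (d m - d i).toNat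
  have hr : ∀ i, ratDeg (algebraMap k[X] (RatFunc k) (r i)) ≤ ↑(d m - d i) := fun i => by
    by_cases hi : γ i = 0
    · simp [r, hi]
    rw [ratDeg_algebraMap (by simpa [r] using hi), natDegree_C_mul_X_pow _ _ hi, hdeg i hi]
  have hrγ : (fun i => leadingCoeffAt (d m - d i) (algebraMap k[X] (RatFunc k) (r i))) = γ := by
    funext i
    by_cases hi : γ i = 0
    · simp [r, hi]
    rw [← hdeg i hi, leadingCoeffAt_C_mul_X_pow]
  refine ⟨r, m, by simpa [r] using hm, hr, rowDeg_lt_coe_iff.2 fun j => ?_⟩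
  refine (ratDeg_vecMul_le hd hr j).lt_of_ne fun h => ?_
  rw [← leadingCoeffAt_ne_zero_iff, leadingCoeffAt_vecMul hd hr, hrγ, hγL] at h
  exact h rfl

lemma det_ne_zero_of_rowReduced (hd : ∀ i, rowDeg (M i) = d i) (hR : RowReduced M) :
    (leadingRowCoeffMatrix M d).det ≠ 0 := by
  intro hL
  obtain ⟨r, m, hrm, -, hlt⟩ := exists_rowDeg_vecMul_lt hd hL
  refine hlt.not_ge ?_
  calc (d m : WithBot ℤ)
      = ratDeg (algebraMap k[X] (RatFunc k) (r m)) + rowDeg (M m) := by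
        rw [ratDeg_algebraMap_of_isUnit hrm, hd, zero_add]
    _ ≤ Finset.univ.sup fun i => ratDeg (algebraMap k[X] (RatFunc k) (r i)) + rowDeg (M i) :=
        Finset.le_sup (f := fun i => ratDeg (algebraMap k[X] (RatFunc k) (r i)) + rowDeg (M i))
          (Finset.mem_univ m)
    _ = rowDeg ((algebraMap k[X] (RatFunc k) ∘ r) ᵥ* M) := (hR _).symm

lemma rowReduced_iff_ratDeg_det_eq (hd : ∀ i, rowDeg (M i) = d i) :
    RowReduced M ↔ ratDeg M.det = ↑(∑ i, d i) := by
  rw [ratDeg_det_eq_sum_iff hd]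
  exact ⟨det_ne_zero_of_rowReduced hd, rowReduced_of_det_ne_zero hd⟩

lemma det_map_algebraMap_mul (U : Matrix (Fin n) (Fin n) k[X])
    (M : Matrix (Fin n) (Fin n) (RatFunc k)) :
    (U.map (algebraMap k[X] (RatFunc k)) * M).det = algebraMap k[X] (RatFunc k) U.det * M.det := by
  rw [det_mul, ← RingHom.mapMatrix_apply, ← RingHom.map_det]

lemma det_map_algebraMap_mul_ne_zero {U : Matrix (Fin n) (Fin n) k[X]} (hU : IsUnit U.det)
    (hM : M.det ≠ 0) : (U.map (algebraMap k[X] (RatFunc k)) * M).det ≠ 0 := by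
  rw [det_map_algebraMap_mul]
  exact mul_ne_zero (RatFunc.algebraMap_ne_zero hU.ne_zero) hM

lemma intDegree_det_map_algebraMap_mul {U : Matrix (Fin n) (Fin n) k[X]} (hU : IsUnit U.det)
    (hM : M.det ≠ 0) :
    (U.map (algebraMap k[X] (RatFunc k)) * M).det.intDegree = M.det.intDegree := by
  rw [det_map_algebraMap_mul, RatFunc.intDegree_mul (RatFunc.algebraMap_ne_zero hU.ne_zero) hM,
    RatFunc.intDegree_polynomial, natDegree_eq_zero_of_isUnit hU, Nat.cast_zero, zero_add]

/-- `U` replaces the row `M m` by the combination of `exists_rowDeg_vecMul_lt`. -/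
lemma exists_isUnit_det_rowDeg_sum_lt (hM : M.det ≠ 0) (hd : ∀ i, rowDeg (M i) = d i)
    (hL : (leadingRowCoeffMatrix M d).det = 0) :
    ∃ (U : Matrix (Fin n) (Fin n) k[X]) (d' : Fin n → ℤ), IsUnit U.det ∧
      (∀ i, rowDeg ((U.map (algebraMap k[X] (RatFunc k)) * M) i) = d' i) ∧
      ∑ i, d' i < ∑ i, d i := by
  obtain ⟨r, m, hrm, -, hlt⟩ := exists_rowDeg_vecMul_lt hd hL
  set U := (1 : Matrix (Fin n) (Fin n) k[X]).updateRow m r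
  have hU : U.det = r m := by
    simpa [← vecMul_eq_sum] using det_updateRow_sum (1 : Matrix (Fin n) (Fin n) k[X]) m r
  have hUM : U.map (algebraMap k[X] (RatFunc k)) * M =
      M.updateRow m ((algebraMap k[X] (RatFunc k) ∘ r) ᵥ* M) := by
    rw [map_updateRow, Matrix.map_one _ (map_zero _) (map_one _), updateRow_mul, Matrix.one_mul]
  have hU' : IsUnit U.det := hU ▸ hrm
  choose d' hd' using exists_rowDeg_eq_coe (det_map_algebraMap_mul_ne_zero hU' hM)
  refine ⟨U, d', hU', hd', Finset.sum_lt_sum (fun i _ => ?_) ⟨m, Finset.mem_univ m, ?_⟩⟩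
  · rw [← WithBot.coe_le_coe, ← hd', ← hd, hUM]
    rcases eq_or_ne i m with rfl | hi
    · rw [updateRow_self, hd]
      exact hlt.le
    · rw [updateRow_ne hi]
  · rw [← WithBot.coe_lt_coe, ← hd', hUM, updateRow_self]
    exact hlt

lemma exists_isUnit_det_rowReduced_mul (hM : M.det ≠ 0) :
    ∃ U : Matrix (Fin n) (Fin n) k[X], IsUnit U.det ∧
      RowReduced (U.map (algebraMap k[X] (RatFunc k)) * M) := by
  choose d hd using exists_rowDeg_eq_coe hM
  induction hN : (∑ i, d i - M.det.intDegree).toNat using Nat.strong_induction_on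
    generalizing M d with
  | _ N ih =>
  by_cases hL : (leadingRowCoeffMatrix M d).det = 0
  · obtain ⟨U, d', hU, hd', hlt⟩ := exists_isUnit_det_rowDeg_sum_lt hM hd hL
    have hUM := det_map_algebraMap_mul_ne_zero hU hM
    have hle : ratDeg (U.map (algebraMap k[X] (RatFunc k)) * M).det ≤ ↑(∑ i, d' i) :=
      ratDeg_det_le hd'
    rw [ratDeg_of_ne_zero hUM, WithBot.coe_le_coe, intDegree_det_map_algebraMap_mul hU hM] at hle
    have hlt' :
        (∑ i, d' i - (U.map (algebraMap k[X] (RatFunc k)) * M).det.intDegree).toNat < N := by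
      rw [intDegree_det_map_algebraMap_mul hU hM]; omega
    obtain ⟨V, hV, hVUM⟩ := ih _ hlt' hUM d' hd' rfl
    refine ⟨V * U, by rw [det_mul]; exact hV.mul hU, ?_⟩
    rwa [Matrix.map_mul, Matrix.mul_assoc]
  · exact ⟨1, by simp, by simpa using rowReduced_of_det_ne_zero hd hL⟩

end RowDegree

/-- A nonsingular matrix `M ∈ k(t)^{n×n}` is row reduced iff `deg det M` equals the sum of
the row degrees, and there is a unimodular `U ∈ k[t]^{n×n}` such that `U·M` is row reduced. -/
theorem stmt_12 {k : Type*} [Field k] {n : ℕ}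
    (M : Matrix (Fin n) (Fin n) (RatFunc k)) (hM : M.det ≠ 0) :
    (RowReduced M ↔ ratDeg M.det = ∑ i, rowDeg (M i)) ∧
    (∃ U : Matrix (Fin n) (Fin n) (Polynomial k),
      (∃ u : k, u ≠ 0 ∧ U.det = Polynomial.C u) ∧
      RowReduced (U.map ⇑(algebraMap (Polynomial k) (RatFunc k)) * M)) := by
  choose d hd using exists_rowDeg_eq_coe hM
  refine ⟨?_, ?_⟩
  · rw [rowReduced_iff_ratDeg_det_eq hd, WithBot.coe_sum]
    simp only [hd]
  · obtain ⟨U, hU, hUM⟩ := exists_isUnit_det_rowReduced_mul hM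
    obtain ⟨u, hu, hUu⟩ := Polynomial.isUnit_iff.1 hU
    exact ⟨U, ⟨u, hu.ne_zero, hUu.symm⟩, hUM⟩
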